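/- arXiv:1310.4469 — 5 statements merged into one kernel-verified Lean document; each statement's English description precedes it below -/
import Mathlib

section
/- All the cohomology groups H^j(A^•) are finite if and only if, for every j, both ker f^j and coker f^j are finite; and in that case the alternating products agree: ∏_j (#H^j(A^•))^{(−1)^j} = ∏_j (#ker(f^j) / #coker(f^j))^{(−1)^j}, an equality of positive rational numbers (both products have only finitely many factors different from 1). -/
/-!
Write `K = ker h^{j+1} = g^{j+1}(B^{j+1})`. Then `im d^j ≤ K ≤ ker d^{j+1}`, and the two steps of
this filtration of `H^{j+1}` are `K / im d^j ≅ B^{j+1} / im f^j = coker f^j` (via `g^{j+1}`) and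
`ker d^{j+1} / K ≅ ker f^{j+1}` (via `h^{j+1}`). Hence `#H^{j+1} = #ker f^{j+1} · #coker f^j`,
which gives the finiteness criterion. In the alternating product `#ker f^{j+1}` carries its own
sign `(-1)^{j+1}`, while `#coker f^j` carries `(-1)^{j+1} = -(-1)^j` and so ends up in the
denominator.
-/

open Filter

section
variable (A B C : ℤ → Type*) [∀ j, AddCommGroup (A j)] [∀ j, AddCommGroup (B j)]
  [∀ j, AddCommGroup (C j)]

/-- The differential `d^j := g^{j+1} ∘ f^j ∘ h^j : A^j → A^{j+1}`. -/
abbrev dMap (g : ∀ j, B j →+ A j) (h : ∀ j, A j →+ C j) (f : ∀ j, C j →+ B (j + 1)) (j : ℤ) :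
    A j →+ A (j + 1) :=
  (g (j + 1)).comp ((f j).comp (h j))

/-- The cohomology `H^{j+1}(A^•) = ker d^{j+1} / im d^j` of the complex `(A^•, d)`
(indexed here so that `cohomologyAt ... j` is the cohomology in degree `j + 1`). -/
abbrev cohomologyAt (g : ∀ j, B j →+ A j) (h : ∀ j, A j →+ C j)
    (f : ∀ j, C j →+ B (j + 1)) (j : ℤ) : Type _ :=
  (dMap A B C g h f (j + 1)).ker ⧸
    ((dMap A B C g h f j).range.addSubgroupOf (dMap A B C g h f (j + 1)).ker)

section ShortExact

variable {X Y Z : Type*} [AddGroup X] [AddGroup Y] [AddGroup Z]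

theorem AddSubgroup.relIndex_map_comap_of_range_eq_ker {g : Y →+ X} {h : X →+ Z}
    (hg : Function.Injective g) (hh : Function.Surjective h) (hex : g.range = h.ker)
    (V : AddSubgroup Y) (U : AddSubgroup Z) :
    (V.map g).relIndex (U.comap h) = Nat.card U * V.index := by
  have hmid : g.range = (⊥ : AddSubgroup Z).comap h := by rw [hex, AddMonoidHom.comap_bot]
  have hlow : V.map g ≤ g.range := by rw [g.range_eq_map]; exact AddSubgroup.map_mono le_top
  have hhigh : g.range ≤ U.comap h := hmid ▸ AddSubgroup.comap_mono bot_le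
  have hlow_index : (V.map g).relIndex g.range = V.index := by
    rw [g.range_eq_map, AddSubgroup.relIndex_map_map_of_injective _ _ hg,
      AddSubgroup.relIndex_top_right]
  have hhigh_index : g.range.relIndex (U.comap h) = Nat.card U := by
    rw [hmid, AddSubgroup.relIndex_comap, AddSubgroup.map_comap_eq_self_of_surjective hh,
      AddSubgroup.relIndex_bot_left]
  rw [← AddSubgroup.relIndex_mul_relIndex _ _ _ hlow hhigh, hlow_index, hhigh_index, mul_comm]

theorem AddMonoidHom.ker_comp_comp_of_injective {W : Type*} [AddGroup W] {g : Y →+ W}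
    (hg : Function.Injective g) (f : Z →+ Y) (h : X →+ Z) :
    (g.comp (f.comp h)).ker = f.ker.comap h := by
  rw [AddMonoidHom.ker_comp_of_injective _ _ hg, AddMonoidHom.comap_ker]

theorem AddMonoidHom.range_comp_comp_of_surjective {W : Type*} [AddGroup W] (g : Y →+ W)
    (f : Z →+ Y) {h : X →+ Z} (hh : Function.Surjective h) :
    (g.comp (f.comp h)).range = f.range.map g := by
  rw [AddMonoidHom.range_comp, AddMonoidHom.range_comp, h.range_eq_map,
    AddSubgroup.map_top_of_surjective _ hh, ← f.range_eq_map]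

end ShortExact

theorem finite_iff_card_ne_zero_of_addGroup (G : Type*) [AddGroup G] :
    Finite G ↔ Nat.card G ≠ 0 := by
  rw [Nat.card_ne_zero, and_iff_right ⟨0⟩]

theorem Function.HasFiniteMulSupport.zpow_right {α M : Type*} [DivisionMonoid M] {k : α → M}
    (hk : k.HasFiniteMulSupport) (e : α → ℤ) : (fun a ↦ k a ^ e a).HasFiniteMulSupport :=
  Set.Finite.subset hk fun a ha hka ↦ ha (by simp only [hka, one_zpow])

theorem finprod_shift_mul_zpow_negOnePow {M : Type*} [DivisionCommMonoid M] {k c : ℤ → M}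
    (hk : k.HasFiniteMulSupport) (hc : c.HasFiniteMulSupport) :
    ∏ᶠ j : ℤ, (k (j + 1) * c j) ^ ((j + 1).negOnePow : ℤ) =
      ∏ᶠ j : ℤ, (k j / c j) ^ (j.negOnePow : ℤ) := by
  have hk' : (fun j : ℤ ↦ k j ^ (j.negOnePow : ℤ)).HasFiniteMulSupport := hk.zpow_right _
  have hc' : (fun j : ℤ ↦ c j ^ ((j + 1).negOnePow : ℤ)).HasFiniteMulSupport := hc.zpow_right _
  have hshift : ∏ᶠ j : ℤ, k (j + 1) ^ ((j + 1).negOnePow : ℤ) =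
      ∏ᶠ j : ℤ, k j ^ (j.negOnePow : ℤ) :=
    finprod_comp (g := fun j : ℤ ↦ k j ^ (j.negOnePow : ℤ)) _ (Equiv.addRight 1).bijective
  calc ∏ᶠ j : ℤ, (k (j + 1) * c j) ^ ((j + 1).negOnePow : ℤ)
      = (∏ᶠ j : ℤ, k (j + 1) ^ ((j + 1).negOnePow : ℤ)) *
          ∏ᶠ j : ℤ, c j ^ ((j + 1).negOnePow : ℤ) := by
        simp_rw [mul_zpow]
        exact finprod_mul_distrib (hk'.comp_of_injective (add_left_injective 1)) hc'
    _ = ∏ᶠ j : ℤ, k j ^ (j.negOnePow : ℤ) * c j ^ ((j + 1).negOnePow : ℤ) := by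
        rw [hshift, finprod_mul_distrib hk' hc']
    _ = ∏ᶠ j : ℤ, (k j / c j) ^ (j.negOnePow : ℤ) := by
        simp_rw [Int.negOnePow_succ, Units.val_neg, zpow_neg, div_zpow, div_eq_mul_inv]

variable {A B C} (g : ∀ j, B j →+ A j) (h : ∀ j, A j →+ C j) (f : ∀ j, C j →+ B (j + 1))

theorem card_cohomologyAt (hg : ∀ j, Function.Injective (g j))
    (hh : ∀ j, Function.Surjective (h j)) (hexact : ∀ j, (g j).range = (h j).ker) (j : ℤ) :
    Nat.card (cohomologyAt A B C g h f j) =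
      Nat.card (f (j + 1)).ker * Nat.card (B (j + 1) ⧸ (f j).range) := by
  change (dMap A B C g h f j).range.relIndex (dMap A B C g h f (j + 1)).ker = _
  rw [AddMonoidHom.ker_comp_comp_of_injective (hg _),
    AddMonoidHom.range_comp_comp_of_surjective _ _ (hh _),
    AddSubgroup.relIndex_map_comap_of_range_eq_ker (hg _) (hh _) (hexact _),
    AddSubgroup.index_eq_card]

theorem finite_cohomologyAt_iff (hg : ∀ j, Function.Injective (g j))
    (hh : ∀ j, Function.Surjective (h j)) (hexact : ∀ j, (g j).range = (h j).ker) (j : ℤ) :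
    Finite (cohomologyAt A B C g h f j) ↔
      Finite (f (j + 1)).ker ∧ Finite (B (j + 1) ⧸ (f j).range) := by
  simp only [finite_iff_card_ne_zero_of_addGroup, card_cohomologyAt g h f hg hh hexact,
    mul_ne_zero_iff]

theorem hasFiniteMulSupport_card_ker (hh : ∀ j, Function.Surjective (h j)) (S : Finset ℤ)
    (hA : ∀ j ∉ S, Subsingleton (A j)) :
    (fun j ↦ (Nat.card (f j).ker : ℚ)).HasFiniteMulSupport := by
  refine S.finite_toSet.subset fun j hj ↦ by_contra fun hjS ↦ hj ?_
  have := hA j hjS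
  have := (hh j).subsingleton
  change (Nat.card (f j).ker : ℚ) = 1
  rw [Nat.card_of_subsingleton (0 : (f j).ker), Nat.cast_one]

theorem hasFiniteMulSupport_card_coker (hg : ∀ j, Function.Injective (g j)) (S : Finset ℤ)
    (hA : ∀ j ∉ S, Subsingleton (A j)) :
    (fun j ↦ (Nat.card (B (j + 1) ⧸ (f j).range) : ℚ)).HasFiniteMulSupport := by
  refine (S.finite_toSet.preimage (add_left_injective 1).injOn).subset
    fun j hj ↦ by_contra fun hjS ↦ hj ?_
  have := hA (j + 1) hjS
  have := (hg (j + 1)).subsingleton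
  have := (QuotientAddGroup.mk_surjective (s := (f j).range)).subsingleton
  change (Nat.card (B (j + 1) ⧸ (f j).range) : ℚ) = 1
  rw [Nat.card_of_subsingleton (0 : B (j + 1) ⧸ (f j).range), Nat.cast_one]

/-- **Lemma 5.2.** Given short exact sequences `0 → B^j → A^j → C^j → 0` with `A^j = 0` for
all but finitely many `j`, and maps `f^j : C^j → B^{j+1}`, with `d^j := g^{j+1} ∘ f^j ∘ h^j`:
all the cohomology groups `H^j(A^•)` are finite if and only if all the kernels and cokernels
of the `f^j` are finite, in which case
`∏_j (#H^j(A^•))^{(-1)^j} = ∏_j (#ker f^j / #coker f^j)^{(-1)^j}`. -/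
theorem finite_cohomology_iff_and_finprod_eq
    (g : ∀ j, B j →+ A j) (h : ∀ j, A j →+ C j) (f : ∀ j, C j →+ B (j + 1))
    (hg : ∀ j, Function.Injective (g j)) (hh : ∀ j, Function.Surjective (h j))
    (hexact : ∀ j, (g j).range = (h j).ker)
    (S : Finset ℤ) (hA : ∀ j ∉ S, Subsingleton (A j)) :
    ((∀ j, Finite (cohomologyAt A B C g h f j)) ↔
      ∀ j, Finite ((f j).ker) ∧ Finite (B (j + 1) ⧸ (f j).range)) ∧
    ((∀ j, Finite ((f j).ker) ∧ Finite (B (j + 1) ⧸ (f j).range)) →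
      ∏ᶠ j : ℤ, (Nat.card (cohomologyAt A B C g h f j) : ℚ) ^ ((j + 1).negOnePow : ℤ) =
        ∏ᶠ j : ℤ, ((Nat.card ((f j).ker) : ℚ) / (Nat.card (B (j + 1) ⧸ (f j).range) : ℚ)) ^
          (j.negOnePow : ℤ)) := by
  have hfin := finite_cohomologyAt_iff g h f hg hh hexact
  refine ⟨⟨fun hH j ↦ ⟨?_, ((hfin j).1 (hH j)).2⟩,
    fun hf j ↦ (hfin j).2 ⟨(hf (j + 1)).1, (hf j).2⟩⟩, fun _ ↦ ?_⟩
  · obtain ⟨i, rfl⟩ : ∃ i, i + 1 = j := ⟨j - 1, sub_add_cancel j 1⟩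
    exact ((hfin i).1 (hH i)).1
  · simp_rw [card_cohomologyAt g h f hg hh hexact, Nat.cast_mul]
    exact finprod_shift_mul_zpow_negOnePow (hasFiniteMulSupport_card_ker h f hh S hA)
      (hasFiniteMulSupport_card_coker g f hg S hA)

end
end

section
/- For each j there is a short exact sequence 0 → coker(f^{j−1}) → H^j(A^•) → ker(f^j) → 0. More precisely: h^j maps ker(d^j) onto ker(f^j), so it induces a surjective homomorphism H^j(A^•) → ker(f^j); the kernel of this surjection is the image of B^j in H^j(A^•) (via g^j, noting g^j(B^j) ⊆ ker(d^j)), and g^j induces an isomorphism of coker(f^{j−1}) = B^j/range(f^{j−1}) onto this kernel. -/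
/-! Since `g` is injective, `ker d = ker (f ∘ h)`, so `h` restricts to a map `ker d → ker f`;
it is onto because `h` is, and by exactness its kernel is the image of `B` under `g`.
The coboundaries lie in this image, hence the sequence `B → ker d → ker f → 0` stays exact
after dividing out the coboundaries, and the `g`-preimage of the coboundaries is `range f`,
again because `g` is injective and the previous `h` surjective. -/

section
variable (A B C : ℤ → Type*) [∀ j, AddCommGroup (A j)] [∀ j, AddCommGroup (B j)]
  [∀ j, AddCommGroup (C j)]

namespace QuotientAddGroup

variable {G K L : Type*} [AddCommGroup G] [AddCommGroup K] [AddCommGroup L]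

theorem map_injective_of_comap_eq {R : AddSubgroup G} {N : AddSubgroup K} {φ : G →+ K}
    (hR : N.comap φ = R) : Function.Injective (map R N φ hR.ge) := by
  rw [← AddMonoidHom.ker_eq_bot_iff, ker_map, hR, map_mk'_self]

theorem range_map_eq_ker_lift {R : AddSubgroup G} {N : AddSubgroup K} {φ : G →+ K}
    {ψ : K →+ L} (hφψ : φ.range = ψ.ker) (hR : R ≤ N.comap φ) (hN : N ≤ ψ.ker) :
    (map R N φ hR).range = (lift N ψ hN).ker := by
  have hrange : (map R N φ hR).range = ((mk' N).comp φ).range := by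
    rw [← show (map R N φ hR).comp (mk' R) = (mk' N).comp φ from AddMonoidHom.ext fun _ => rfl,
      AddMonoidHom.range_comp, range_mk', ← AddMonoidHom.range_eq_map]
  rw [hrange, AddMonoidHom.range_comp, hφψ, ker_lift]

end QuotientAddGroup

section

variable {A B C} (g : ∀ j, B j →+ A j) (h : ∀ j, A j →+ C j) (f : ∀ j, C j →+ B (j + 1))
  {j : ℤ}

theorem ker_dMap (hg : Function.Injective (g (j + 1))) :
    (dMap A B C g h f j).ker = ((f j).comp (h j)).ker :=
  AddMonoidHom.ker_comp_of_injective _ _ hg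

def dMapKerToKer (hg : Function.Injective (g (j + 1))) :
    (dMap A B C g h f j).ker →+ (f j).ker :=
  ((h j).comp (AddSubgroup.subtype _)).codRestrict _ fun x => by
    simpa [ker_dMap g h f hg] using x.2

def toDMapKer (hgh : ∀ b, h j (g j b) = 0) : B j →+ (dMap A B C g h f j).ker :=
  (g j).codRestrict _ fun b => by simp [hgh]

variable {g h f}

theorem dMapKerToKer_surjective (hg : Function.Injective (g (j + 1)))
    (hh : Function.Surjective (h j)) : Function.Surjective (dMapKerToKer g h f hg) := by
  rintro ⟨c, hc⟩
  obtain ⟨a, rfl⟩ := hh c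
  exact ⟨⟨a, by simpa [ker_dMap g h f hg] using hc⟩, rfl⟩

theorem range_toDMapKer_eq_ker (hg : Function.Injective (g (j + 1)))
    (hexact : (g j).range = (h j).ker) :
    (toDMapKer g h f fun b => hexact.le ⟨b, rfl⟩).range = (dMapKerToKer g h f hg).ker := by
  ext x
  simpa [Subtype.ext_iff, toDMapKer, dMapKerToKer] using SetLike.ext_iff.1 hexact (x : A j)

theorem addSubgroupOf_range_dMap_le_range_toDMapKer (hgh : ∀ b, h (j + 1) (g (j + 1) b) = 0) :
    (dMap A B C g h f j).range.addSubgroupOf (dMap A B C g h f (j + 1)).ker ≤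
      (toDMapKer g h f hgh).range := by
  rintro x ⟨a, ha⟩
  exact ⟨f j (h j a), Subtype.ext ha⟩

theorem comap_toDMapKer_eq_range (hg : Function.Injective (g (j + 1)))
    (hh : Function.Surjective (h j)) (hgh : ∀ b, h (j + 1) (g (j + 1) b) = 0) :
    ((dMap A B C g h f j).range.addSubgroupOf (dMap A B C g h f (j + 1)).ker).comap
      (toDMapKer g h f hgh) = (f j).range := by
  ext b
  simp [toDMapKer, AddSubgroup.mem_addSubgroupOf, hg.eq_iff, hh.exists]

end

/-- **From the proof of Lemma 5.2.** For each `j` there is a short exact sequence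
`0 → coker f^j → H^{j+1}(A^•) → ker f^{j+1} → 0`, where the surjection `β` onto
`ker f^{j+1}` is induced by `h^{j+1}` on `ker d^{j+1}`, and the injection `α` is induced
by `g^{j+1} : B^{j+1} → A^{j+1}`. -/
theorem exists_shortExact_coker_cohomology_ker
    (g : ∀ j, B j →+ A j) (h : ∀ j, A j →+ C j) (f : ∀ j, C j →+ B (j + 1))
    (hg : ∀ j, Function.Injective (g j)) (hh : ∀ j, Function.Surjective (h j))
    (hexact : ∀ j, (g j).range = (h j).ker) (j : ℤ) :
    ∃ (α : (B (j + 1) ⧸ (f j).range) →+ cohomologyAt A B C g h f j)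
      (β : cohomologyAt A B C g h f j →+ (f (j + 1)).ker),
      Function.Injective α ∧ Function.Surjective β ∧ α.range = β.ker ∧
      (∀ x : (dMap A B C g h f (j + 1)).ker,
        ((β (QuotientAddGroup.mk x) : (f (j + 1)).ker) : C (j + 1)) = h (j + 1) (x : A (j + 1))) ∧
      (∀ (b : B (j + 1)) (x : (dMap A B C g h f (j + 1)).ker),
        (x : A (j + 1)) = g (j + 1) b →
        α (QuotientAddGroup.mk b) = QuotientAddGroup.mk x) := by
  have hgh : ∀ b, h (j + 1) (g (j + 1) b) = 0 := fun b => (hexact (j + 1)).le ⟨b, rfl⟩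
  have hcomap := comap_toDMapKer_eq_range (f := f) (hg (j + 1)) (hh j) hgh
  have hN := (addSubgroupOf_range_dMap_le_range_toDMapKer (f := f) hgh).trans
    (range_toDMapKer_eq_ker (hg (j + 1 + 1)) (hexact (j + 1))).le
  refine ⟨QuotientAddGroup.map _ _ _ hcomap.ge, QuotientAddGroup.lift _ _ hN,
    QuotientAddGroup.map_injective_of_comap_eq hcomap,
    QuotientAddGroup.lift_surjective_of_surjective _ _
      (dMapKerToKer_surjective (hg (j + 1 + 1)) (hh (j + 1))) _,
    QuotientAddGroup.range_map_eq_ker_lift (range_toDMapKer_eq_ker _ (hexact (j + 1))) _ _,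
    fun x => rfl, fun b x hx => congrArg _ (Subtype.ext hx.symm)⟩

end
end

section
/- The sequence 0 → M → M_* → M_* → 0 given by ι and α_γ is exact: ι is injective, the kernel of α_γ equals the range of ι, and α_γ is surjective. -/
/-!
Since `γ` topologically generates `Γ`, the group is abelian, and a locally constant function on
`Γ` is determined by its values on the powers of `γ`. A function killed by `α_γ` satisfies
`f (σ γ) = γ f σ`, so on powers of `γ` it agrees with `ι (f 1)`.

For surjectivity, compactness gives an open subgroup, of index `n` say, whose elements fix `g`
under right translation and fix every value of `g`; in particular so does `γ ^ n`. The twisted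
sums `S_r σ = ∑_{i<r} γ^i g (σ γ^{-i})` satisfy `S_{r+1} σ = g σ + γ S_r (σ γ⁻¹)` and are
`nN`-periodic in `r`, since their terms are `n`-periodic and `N` kills `M`. If `H` is an open
subgroup of index `nN`, then `Γ ⧸ H` is cyclic of order `nN`, generated by the image of `γ`.
Reading `r` off as a discrete logarithm of `σ` in `Γ ⧸ H`, the function `f σ = S_r (σ γ⁻¹)` is
locally constant and solves `f (σ γ) - γ f σ = g σ`.
-/

open Topology

theorem isMulCommutative_of_dense_zpowers {Γ : Type*} [Group Γ] [TopologicalSpace Γ]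
    [ContinuousMul Γ] [T2Space Γ] {γ : Γ} (hγ : Dense (Subgroup.zpowers γ : Set Γ)) :
    IsMulCommutative Γ := by
  refine isMulCommutative_iff.2 fun a b => congrFun (Continuous.ext_on (hγ.prod hγ)
    (continuous_fst.mul continuous_snd) (continuous_snd.mul continuous_fst) ?_) (a, b)
  rintro ⟨_, _⟩ ⟨⟨i, rfl⟩, ⟨j, rfl⟩⟩
  exact (Commute.zpow_zpow_self γ i j).eq

section LocallyConstant

variable {X Y : Type*} [TopologicalSpace X]

theorem LocallyConstant.ext_on {s : Set X} (hs : Dense s) {f g : LocallyConstant X Y}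
    (h : Set.EqOn f g s) : f = g := by
  let _ : TopologicalSpace Y := ⊥
  have : DiscreteTopology Y := ⟨rfl⟩
  exact DFunLike.coe_injective (Continuous.ext_on hs f.continuous g.continuous h)

theorem IsLocallyConstant.finset_sum [AddCommMonoid Y] {ι : Type*} {s : Finset ι}
    {f : ι → X → Y} (hf : ∀ i ∈ s, IsLocallyConstant (f i)) :
    IsLocallyConstant fun x => ∑ i ∈ s, f i x := by
  simpa only [Finset.sum_fn] using
    Finset.sum_induction f IsLocallyConstant (fun _ _ hf hg => hf.add hg)
      (IsLocallyConstant.const 0) hf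

theorem IsLocallyConstant.comp_family {Z : Type*} {p : X → Z} {F : Z → X → Y}
    (hp : IsLocallyConstant p) (hF : ∀ z, IsLocallyConstant (F z)) :
    IsLocallyConstant fun x => F (p x) x := by
  refine (IsLocallyConstant.iff_eventually_eq _).2 fun x => ?_
  filter_upwards [hp.eventually_eq x, (hF (p x)).eventually_eq x] with y hpy hFy
  rw [hpy, hFy]

end LocallyConstant

section Kernel

variable {Γ M : Type*} [Group Γ] [MulAction Γ M]

theorem map_mul_zpow_eq_zpow_smul {f : Γ → M} {γ : Γ} (hf : ∀ σ, f (σ * γ) = γ • f σ)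
    (σ : Γ) (i : ℤ) : f (σ * γ ^ i) = γ ^ i • f σ := by
  induction i using Int.induction_on with
  | zero => simp
  | succ i ih => rw [zpow_add_one, ← mul_assoc, hf, ih, smul_smul, (Commute.self_zpow γ i).eq]
  | pred i ih =>
    have h := hf (σ * γ ^ (-(i : ℤ) - 1))
    rw [mul_assoc, ← zpow_add_one, sub_add_cancel, ih] at h
    rw [eq_inv_smul_iff.2 h.symm, smul_smul, ← zpow_neg_one, ← zpow_add, neg_add_eq_sub]

theorem LocallyConstant.eq_of_map_mul_eq_smul [TopologicalSpace Γ] {γ : Γ}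
    (hγ : Dense (Subgroup.zpowers γ : Set Γ)) {f g : LocallyConstant Γ M}
    (hf : ∀ σ, f (σ * γ) = γ • f σ) (hg : ∀ σ, g (σ * γ) = γ • g σ) (h1 : f 1 = g 1) :
    f = g := by
  refine LocallyConstant.ext_on hγ ?_
  rintro _ ⟨i, rfl⟩
  change f (γ ^ i) = g (γ ^ i)
  rw [← one_mul (γ ^ i), map_mul_zpow_eq_zpow_smul hf, map_mul_zpow_eq_zpow_smul hg, h1]

end Kernel

theorem Function.Periodic.sum_range_mul {A : Type*} [AddCommMonoid A] {f : ℕ → A} {n : ℕ}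
    (hf : Function.Periodic f n) (N : ℕ) :
    ∑ i ∈ Finset.range (n * N), f i = N • ∑ i ∈ Finset.range n, f i := by
  induction N with
  | zero => simp
  | succ N ih =>
    rw [Nat.mul_succ, Finset.sum_range_add, ih, succ_nsmul]
    refine congrArg _ (Finset.sum_congr rfl fun i _ => ?_)
    rw [add_comm, mul_comm]
    exact (hf.nat_mul N) i

section InvarianceSubgroup

variable {Γ M : Type*} [Group Γ] [MulAction Γ M]

def invarianceSubgroup (g : Γ → M) : Subgroup Γ where
  carrier := {u | ∀ σ, g (σ * u) = g σ ∧ u • g σ = g σ}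
  one_mem' σ := by simp
  mul_mem' {a b} ha hb σ := by
    rw [← mul_assoc, (hb _).1, (ha σ).1, mul_smul, (hb σ).2, (ha σ).2]
    exact ⟨rfl, rfl⟩
  inv_mem' {a} ha σ := by
    rw [inv_smul_eq_iff, (ha σ).2, ← (ha _).1, inv_mul_cancel_right]
    exact ⟨rfl, rfl⟩

theorem mem_invarianceSubgroup {g : Γ → M} {u : Γ} :
    u ∈ invarianceSubgroup g ↔ ∀ σ, g (σ * u) = g σ ∧ u • g σ = g σ :=
  Iff.rfl

theorem isOpen_invarianceSubgroup [TopologicalSpace Γ] [IsTopologicalGroup Γ] [CompactSpace Γ]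
    (hstab : ∀ m : M, IsOpen {σ : Γ | σ • m = m}) (g : LocallyConstant Γ M) :
    IsOpen (invarianceSubgroup g : Set Γ) := by
  refine (invarianceSubgroup g).isOpen_of_mem_nhds (g := 1) ?_
  have hright : ∀ᶠ u in 𝓝 (1 : Γ), ∀ σ ∈ Set.univ, g (σ * u) = g σ := by
    refine isCompact_univ.eventually_forall_of_forall_eventually fun σ _ => ?_
    have hmul : ∀ᶠ p in 𝓝 ((1 : Γ), σ), g (p.2 * p.1) = g (σ * 1) :=
      (g.isLocallyConstant.comp_continuous (continuous_snd.mul continuous_fst)).eventually_eq _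
    have hsnd : ∀ᶠ p in 𝓝 ((1 : Γ), σ), g p.2 = g σ :=
      (g.isLocallyConstant.comp_continuous continuous_snd).eventually_eq _
    filter_upwards [hmul, hsnd] with p hp hp'
    rw [hp, hp', mul_one]
  have hvalues : ∀ᶠ u in 𝓝 (1 : Γ), ∀ m ∈ Set.range g, u • m = m :=
    g.range_finite.eventually_all.2 fun m _ => (hstab m).mem_nhds (one_smul Γ m)
  filter_upwards [hright, hvalues] with u hu hv
  exact fun σ => ⟨hu σ trivial, hv _ ⟨σ, rfl⟩⟩

end InvarianceSubgroup

section TwistedSum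

variable {Γ M : Type*} [Group Γ] [AddCommGroup M] [DistribMulAction Γ M]

def twistedSum (γ : Γ) (g : Γ → M) (r : ℕ) (σ : Γ) : M :=
  ∑ i ∈ Finset.range r, γ ^ i • g (σ * (γ ^ i)⁻¹)

theorem twistedSum_succ (γ : Γ) (g : Γ → M) (r : ℕ) (σ : Γ) :
    twistedSum γ g (r + 1) σ = g σ + γ • twistedSum γ g r (σ * γ⁻¹) := by
  rw [twistedSum, twistedSum, Finset.sum_range_succ', pow_zero, inv_one, mul_one, one_smul,
    add_comm, Finset.smul_sum]
  refine congrArg _ (Finset.sum_congr rfl fun i _ => ?_)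
  rw [smul_smul, mul_assoc, ← mul_inv_rev, ← pow_succ, ← pow_succ']

theorem periodic_twistedSum {γ : Γ} {g : Γ → M} {n N : ℕ}
    (hn : γ ^ n ∈ invarianceSubgroup g) (hexp : ∀ m : M, N • m = 0) (σ : Γ) :
    Function.Periodic (twistedSum γ g · σ) (n * N) := by
  have hterm : Function.Periodic (fun i => γ ^ i • g (σ * (γ ^ i)⁻¹)) n := fun i => by
    have hinv : (γ ^ i)⁻¹ * (γ ^ n)⁻¹ = (γ ^ (i + n))⁻¹ := by
      rw [← mul_inv_rev, ← pow_add, add_comm]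
    dsimp only
    rw [← hinv, pow_add, mul_smul, ← mul_assoc,
      ((mem_invarianceSubgroup.1 ((invarianceSubgroup g).inv_mem hn)) _).1,
      ((mem_invarianceSubgroup.1 hn) _).2]
  intro r
  have hshift : Function.Periodic (fun i => γ ^ (r + i) • g (σ * (γ ^ (r + i))⁻¹)) n :=
    fun i => by dsimp only; rw [← add_assoc]; exact hterm _
  change twistedSum γ g (r + n * N) σ = twistedSum γ g r σ
  rw [twistedSum, Finset.sum_range_add, hshift.sum_range_mul, hexp, add_zero, twistedSum]

theorem isLocallyConstant_twistedSum [TopologicalSpace Γ] [IsTopologicalGroup Γ] (γ : Γ)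
    (g : LocallyConstant Γ M) (r : ℕ) : IsLocallyConstant (twistedSum γ g r) :=
  IsLocallyConstant.finset_sum fun _ _ =>
    (g.isLocallyConstant.comp_continuous (continuous_mul_const _)).comp _

end TwistedSum

section CyclicQuotient

variable {Γ : Type*} [Group Γ] [TopologicalSpace Γ] [IsTopologicalGroup Γ] {γ : Γ}
  {H : Subgroup Γ} [H.Normal]

theorem mem_zpowers_mk_of_dense (hγ : Dense (Subgroup.zpowers γ : Set Γ))
    (hH : IsOpen (H : Set Γ)) (x : Γ ⧸ H) : x ∈ Subgroup.zpowers (γ : Γ ⧸ H) := by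
  obtain ⟨σ, rfl⟩ := QuotientGroup.mk_surjective x
  obtain ⟨_, ⟨i, rfl⟩, hi⟩ :=
    hγ.exists_mem_open (hH.leftCoset σ) ⟨σ, 1, H.one_mem, mul_one σ⟩
  refine Subgroup.mem_zpowers_iff.2 ⟨i, ?_⟩
  rw [← QuotientGroup.mk_zpow]
  exact (QuotientGroup.eq.2 ((mem_leftCoset_iff σ).1 hi)).symm

theorem orderOf_mk_eq_index_of_dense (hγ : Dense (Subgroup.zpowers γ : Set Γ))
    (hH : IsOpen (H : Set Γ)) : orderOf (γ : Γ ⧸ H) = H.index :=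
  orderOf_eq_card_of_forall_mem_zpowers (mem_zpowers_mk_of_dense hγ hH)

end CyclicQuotient

theorem exists_map_mul_sub_smul_eq {Γ M : Type*} [Group Γ] [IsMulCommutative Γ]
    [TopologicalSpace Γ] [IsTopologicalGroup Γ] [CompactSpace Γ] {γ : Γ}
    (hγ : Dense (Subgroup.zpowers γ : Set Γ))
    (hindex : ∀ n : ℕ, 1 ≤ n → ∃ H : Subgroup Γ, IsOpen (H : Set Γ) ∧ H.index = n)
    [AddCommGroup M] [DistribMulAction Γ M] {N : ℕ} (hN : 1 ≤ N)
    (hexp : ∀ m : M, N • m = 0) (hstab : ∀ m : M, IsOpen {σ : Γ | σ • m = m})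
    (g : LocallyConstant Γ M) :
    ∃ f : LocallyConstant Γ M, ∀ σ, f (σ * γ) - γ • f σ = g σ := by
  set U := invarianceSubgroup (g : Γ → M)
  have : Finite (Γ ⧸ U) := U.quotient_finite_of_isOpen (isOpen_invarianceSubgroup hstab g)
  obtain ⟨H, hH, hHindex⟩ := hindex (U.index * N)
    (Nat.one_le_iff_ne_zero.2 (mul_ne_zero Subgroup.index_ne_zero_of_finite (by omega)))
  have : Finite (Γ ⧸ H) := H.quotient_finite_of_isOpen hH
  have : DiscreteTopology (Γ ⧸ H) := QuotientGroup.discreteTopology hH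
  have hperiodic (σ : Γ) : Function.Periodic (twistedSum γ g · σ) H.index :=
    hHindex ▸ periodic_twistedSum (U.pow_index_mem γ) hexp σ
  have hlog (x : Γ ⧸ H) : ∃ r : ℕ, (γ : Γ ⧸ H) ^ r = x :=
    mem_powers_iff_mem_zpowers.2 (mem_zpowers_mk_of_dense hγ hH x)
  choose log hlog using hlog
  refine ⟨⟨fun σ => twistedSum γ g (log σ) (σ * γ⁻¹), ?_⟩, fun σ => ?_⟩
  · have hmk : IsLocallyConstant ((↑) : Γ → Γ ⧸ H) :=
      (IsLocallyConstant.iff_continuous _).2 QuotientGroup.continuous_mk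
    exact (hmk.comp log).comp_family fun r =>
      (isLocallyConstant_twistedSum γ g r).comp_continuous (continuous_mul_const _)
  · have hmod : log (σ * γ : Γ) ≡ log σ + 1 [MOD H.index] := by
      rw [← orderOf_mk_eq_index_of_dense hγ hH, ← pow_eq_pow_iff_modEq, pow_succ, hlog, hlog]
      rfl
    change twistedSum γ g (log ↑(σ * γ)) (σ * γ * γ⁻¹)
      - γ • twistedSum γ g (log σ) (σ * γ⁻¹) = g σ
    rw [mul_inv_cancel_right, ← (hperiodic σ).map_mod_nat, hmod, (hperiodic σ).map_mod_nat,
      twistedSum_succ, add_sub_cancel_right]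

theorem coinduced_sequence_exact_general
    (Γ : Type*) [Group Γ] [TopologicalSpace Γ] [IsTopologicalGroup Γ]
    [CompactSpace Γ] [T2Space Γ]
    (γ : Γ) (hγ : Dense ((Subgroup.zpowers γ : Subgroup Γ) : Set Γ))
    (hindex : ∀ n : ℕ, 1 ≤ n → ∃ H : Subgroup Γ, IsOpen (H : Set Γ) ∧ H.index = n)
    (M : Type*) [AddCommGroup M] [DistribMulAction Γ M]
    (N : ℕ) (hN : 1 ≤ N) (hexp : ∀ m : M, N • m = 0)
    (hstab : ∀ m : M, IsOpen {σ : Γ | σ • m = m})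
    (ι : M → LocallyConstant Γ M) (hι : ∀ (m : M) (σ : Γ), ι m σ = σ • m)
    (αγ : LocallyConstant Γ M → LocallyConstant Γ M)
    (hαγ : ∀ (f : LocallyConstant Γ M) (σ : Γ), αγ f σ = f (σ * γ) - γ • f σ) :
    Function.Injective ι ∧ (∀ f, αγ f = 0 ↔ ∃ m, ι m = f) ∧ Function.Surjective αγ := by
  have hcomm := isMulCommutative_of_dense_zpowers hγ
  have hι_mul (m : M) (σ : Γ) : ι m (σ * γ) = γ • ι m σ := by
    rw [hι, hι, smul_smul, isMulCommutative_iff.1 hcomm]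
  refine ⟨fun m m' h => ?_, fun f => ⟨fun hf => ?_, ?_⟩, fun g => ?_⟩
  · simpa only [hι, one_smul] using DFunLike.congr_fun h 1
  · refine ⟨f 1, LocallyConstant.eq_of_map_mul_eq_smul hγ (hι_mul _) (fun σ => ?_) ?_⟩
    · rw [← sub_eq_zero, ← hαγ, hf, LocallyConstant.zero_apply]
    · rw [hι, one_smul]
  · rintro ⟨m, rfl⟩
    ext σ
    rw [hαγ, hι_mul, sub_self, LocallyConstant.zero_apply]
  · obtain ⟨f, hf⟩ := exists_map_mul_sub_smul_eq hγ hindex hN hexp hstab g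
    exact ⟨f, LocallyConstant.ext fun σ => by rw [hαγ, hf]⟩

/-- **The exact sequence (43) of Section 5.2.** Let `Γ` be a profinite group with a
topological generator `γ` such that `Γ` has an open subgroup of every finite index
(so `Γ ≅ Ẑ`), and let `M` be a discrete `Γ`-module of finite exponent.  Let `M_*` be the
co-induced module of locally constant functions `Γ → M`, let `ι : M → M_*` be
`ι m σ = σ • m`, and let `α_γ : M_* → M_*` be `(α_γ f) σ = f (σ γ) - γ • f σ`.  Then the
sequence `0 → M → M_* → M_* → 0` given by `ι` and `α_γ` is exact: `ι` is injective, the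
kernel of `α_γ` equals the range of `ι`, and `α_γ` is surjective. -/
theorem coinduced_sequence_exact
    (Γ : Type*) [Group Γ] [TopologicalSpace Γ] [IsTopologicalGroup Γ]
    [CompactSpace Γ] [T2Space Γ] [TotallyDisconnectedSpace Γ]
    (γ : Γ) (hγ : Dense ((Subgroup.zpowers γ : Subgroup Γ) : Set Γ))
    (hindex : ∀ n : ℕ, 1 ≤ n → ∃ H : Subgroup Γ, IsOpen (H : Set Γ) ∧ H.index = n)
    (M : Type*) [AddCommGroup M] [DistribMulAction Γ M]
    (N : ℕ) (hN : 1 ≤ N) (hexp : ∀ m : M, N • m = 0)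
    (hstab : ∀ m : M, IsOpen {σ : Γ | σ • m = m})
    (ι : M → LocallyConstant Γ M) (hι : ∀ (m : M) (σ : Γ), ι m σ = σ • m)
    (αγ : LocallyConstant Γ M → LocallyConstant Γ M)
    (hαγ : ∀ (f : LocallyConstant Γ M) (σ : Γ), αγ f σ = f (σ * γ) - γ • f σ) :
    Function.Injective ι ∧ (∀ f, αγ f = 0 ↔ ∃ m, ι m = f) ∧ Function.Surjective αγ :=
  coinduced_sequence_exact_general Γ γ hγ hindex M N hN hexp hstab ι hι αγ hαγ
end

section
/- Let T : ℤ × ℤ → ℤ be a function with finite support and let r ∈ ℤ. Then ∑_{j ∈ ℤ} ∑_{i ≤ r} (−1)^{i+j} (r − i) · (T(i,j) − 2·T(i−1, j+1) + T(i−2, j+2)) = ∑_{j ∈ ℤ} (−1)^{j−1} T(r−1, j−r). (All sums have only finitely many nonzero terms.) -/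
/-!
With `f (i, j) = (-1)^(i+j) T (i, j)` the sign depends only on the antidiagonal `i + j`, so the
summand becomes `(r - i) • (f (i, j) - 2 f (i - 1, j + 1) + f (i - 2, j + 2))`. Summing over `j`
first turns it into `(r - i) • Δ²u (i)` for the column sums `u c = ∑ⱼ f (c, j)`, and summing a
weighted second difference by parts leaves `u (r - 1)`, which is the right-hand side.
-/

open Function Set

section AddCommMonoid

variable {M : Type*} [AddCommMonoid M]

theorem finsum_comm {α β : Type*} {g : α → β → M} (hg : (uncurry g).HasFiniteSupport) :
    ∑ᶠ a, ∑ᶠ b, g a b = ∑ᶠ b, ∑ᶠ a, g a b :=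
  calc ∑ᶠ a, ∑ᶠ b, g a b = ∑ᶠ p, uncurry g p := (finsum_curry _ hg).symm
    _ = ∑ᶠ p : β × α, uncurry g p.swap := (finsum_comp_equiv (Equiv.prodComm β α)).symm
    _ = ∑ᶠ b, ∑ᶠ a, g a b := finsum_curry _ (hg.comp_of_injective Prod.swap_injective)

theorem finsum_le_eq_finsum_nat (φ : ℤ → M) (r : ℤ) :
    ∑ᶠ (i) (_ : i ≤ r), φ i = ∑ᶠ k : ℕ, φ (r - k) := by
  have hrange : Iic r = range fun k : ℕ => r - k := by
    ext i
    refine ⟨fun hi => ⟨(r - i).toNat, show r - ((r - i).toNat : ℤ) = i by simp at hi; omega⟩, ?_⟩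
    rintro ⟨k, rfl⟩
    simp
  change ∑ᶠ i ∈ Iic r, φ i = _
  rw [hrange, finsum_mem_range]
  intro k l h
  simpa using h

noncomputable def colSum (f : ℤ × ℤ → M) (c : ℤ) : M := ∑ᶠ j, f (c, j)

theorem colSum_hasFiniteSupport {f : ℤ × ℤ → M} (hf : f.HasFiniteSupport) :
    (colSum f).HasFiniteSupport := by
  refine (hf.image Prod.fst).subset fun c hc => ?_
  by_contra hnot
  exact hc (finsum_eq_zero_of_forall_eq_zero fun j => by_contra fun hj => hnot ⟨(c, j), hj, rfl⟩)

theorem finsum_shift_eq_colSum (f : ℤ × ℤ → M) (c d : ℤ) :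
    ∑ᶠ j, f (c, j + d) = colSum f c :=
  finsum_comp_equiv (Equiv.addRight d) (f := fun j => f (c, j))

end AddCommMonoid

section AddCommGroup

variable {M : Type*} [AddCommGroup M]

theorem sum_range_smul_secondDiff (v : ℕ → M) (n : ℕ) :
    ∑ k ∈ Finset.range (n + 1), k • (v k - 2 • v (k + 1) + v (k + 2)) + (n + 1) • v (n + 1) =
      v 1 + n • v (n + 2) := by
  induction n with
  | zero => simp
  | succ n ih =>
    rw [Finset.sum_range_succ]
    linear_combination (norm := module) ih

theorem finsum_smul_secondDiff {v : ℕ → M} (hv : v.HasFiniteSupport) :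
    ∑ᶠ k : ℕ, k • (v k - 2 • v (k + 1) + v (k + 2)) = v 1 := by
  obtain ⟨n, hn⟩ := hv.bddAbove
  have hvanish : ∀ k, n < k → v k = 0 := fun _ hk => by_contra fun h => (hn h).not_gt hk
  rw [finsum_eq_sum_of_support_subset (s := Finset.range (n + 1)) _ ?_]
  · have := sum_range_smul_secondDiff v n
    rwa [hvanish (n + 1) (by omega), hvanish (n + 2) (by omega), smul_zero, smul_zero,
      add_zero, add_zero] at this
  · intro k hk
    by_contra hkn
    simp only [Finset.coe_range, mem_Iio, not_lt] at hkn
    simp [hvanish k (by omega), hvanish (k + 1) (by omega), hvanish (k + 2) (by omega)] at hk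

theorem finsum_secondDiff_eq_colSum {f : ℤ × ℤ → M} (hf : f.HasFiniteSupport) (c : ℤ) :
    ∑ᶠ j, (f (c, j) - 2 • f (c - 1, j + 1) + f (c - 2, j + 2)) =
      colSum f c - 2 • colSum f (c - 1) + colSum f (c - 2) := by
  rw [finsum_add_distrib, finsum_sub_distrib, ← smul_finsum', finsum_shift_eq_colSum,
    finsum_shift_eq_colSum]
  · rfl
  all_goals fun_prop (disch := intro p q h; simp_all)

theorem finsum_finsum_le_smul_secondDiff {f : ℤ × ℤ → M} (hf : f.HasFiniteSupport) (r : ℤ) :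
    ∑ᶠ j, ∑ᶠ (i) (_ : i ≤ r), (r - i) • (f (i, j) - 2 • f (i - 1, j + 1) + f (i - 2, j + 2)) =
      colSum f (r - 1) := by
  simp_rw [finsum_le_eq_finsum_nat, sub_sub_cancel, natCast_zsmul]
  rw [finsum_comm (by fun_prop (disch := intro p q h; simp_all [Prod.ext_iff]))]
  have hcol (k : ℕ) :
      ∑ᶠ j, k • (f (r - k, j) - 2 • f (r - k - 1, j + 1) + f (r - k - 2, j + 2)) =
        k • (colSum f (r - k) - 2 • colSum f (r - k - 1) + colSum f (r - k - 2)) := by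
    rw [← smul_finsum' _ (by fun_prop (disch := intro p q h; simp_all)),
      finsum_secondDiff_eq_colSum hf]
  have hv : (fun k : ℕ => colSum f (r - k)).HasFiniteSupport :=
    (colSum_hasFiniteSupport hf).comp_of_injective (g := fun k : ℕ => r - k)
      fun k l h => by simpa using h
  have h := finsum_smul_secondDiff hv
  push_cast [sub_add_eq_sub_sub] at h
  simp_rw [hcol]
  exact h

end AddCommGroup

/-- **The combinatorial identity (39) from Aside 2.8.** Let `T : ℤ × ℤ → ℤ` have finite
support and let `r : ℤ`.  Then
`∑_j ∑_{i ≤ r} (-1)^{i+j} (r - i) (T(i,j) - 2 T(i-1,j+1) + T(i-2,j+2))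
  = ∑_j (-1)^{j-1} T(r-1, j-r)`. -/
theorem weighted_sum_second_difference_eq
    (T : ℤ × ℤ → ℤ) (hT : (Function.support T).Finite) (r : ℤ) :
    ∑ᶠ (j : ℤ), ∑ᶠ (i : ℤ) (_ : i ≤ r),
        ((i + j).negOnePow : ℤ) * (r - i) *
          (T (i, j) - 2 * T (i - 1, j + 1) + T (i - 2, j + 2)) =
      ∑ᶠ (j : ℤ), ((j - 1).negOnePow : ℤ) * T (r - 1, j - r) := by
  set f : ℤ × ℤ → ℤ := fun p => ((p.1 + p.2).negOnePow : ℤ) * T p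
  have hf : f.HasFiniteSupport := HasFiniteSupport.mul_right _ hT
  have hlhs (i j : ℤ) : ((i + j).negOnePow : ℤ) * (r - i) *
      (T (i, j) - 2 * T (i - 1, j + 1) + T (i - 2, j + 2)) =
      (r - i) • (f (i, j) - 2 • f (i - 1, j + 1) + f (i - 2, j + 2)) := by
    simp only [f, smul_eq_mul, show i - 1 + (j + 1) = i + j by ring,
      show i - 2 + (j + 2) = i + j by ring]
    ring
  have hrhs (j : ℤ) : ((j - 1).negOnePow : ℤ) * T (r - 1, j - r) = f (r - 1, j + -r) := by
    simp only [f, ← sub_eq_add_neg, show r - 1 + (j - r) = j - 1 by ring]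
  simp_rw [hlhs, hrhs, finsum_shift_eq_colSum]
  exact finsum_finsum_le_smul_secondDiff hf r
end

section
/- The K-linear endomorphism L = F^a of V is semisimple (i.e., every L-invariant K-subspace of V has an L-invariant complement) if and only if every K-subspace W of V with F(W) ⊆ W admits a complementary K-subspace W′ (so V = W ⊕ W′) with F(W′) ⊆ W′. -/
/-
Write `L = F^a`; every `F`-stable subspace is `L`-stable. If `L` is semisimple and `W` is
`F`-stable, choose an `L`-equivariant projection `π` onto `W`. Since `π` commutes with `F^a`,
conjugation by `F` permutes `π, F π F⁻¹, …, F^{a-1} π F^{1-a}` cyclically, so their average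
(`a` is invertible in the characteristic-zero field `K`) is an `F`-equivariant projection onto
`W`, and its kernel is an `F`-stable complement. This needs `σ` to be invertible, which holds
because `σ` is the Frobenius automorphism of `K`.

Conversely, `F` permutes the simple `L`-invariant subspaces, so their sum is `F`-stable. An
`F`-stable complement of that sum contains no simple `L`-invariant subspace, hence is zero, and
`V` is a sum of simple `L`-invariant subspaces, i.e. `L` is semisimple.
-/

open Function Module Polynomial Isocrystal

theorem complementedLattice_of_exists_isCompl_of_map_le {α : Type*} [CompleteLattice α]
    [IsModularLattice α] [IsCompactlyGenerated α] [IsAtomic α] (e : α ≃o α)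
    (h : ∀ a, e a ≤ a → ∃ b, IsCompl a b) : ComplementedLattice α := by
  set N := sSup {a : α | IsAtom a}
  have hN : e N ≤ N := by
    rw [e.map_sSup]
    exact iSup₂_le fun a ha => le_sSup ((e.isAtom_iff a).mpr ha)
  obtain ⟨b, hb⟩ := h N hN
  refine complementedLattice_of_sSup_atoms_eq_top ?_
  obtain rfl | ⟨c, hc, hcb⟩ := eq_bot_or_exists_atom_le b
  · exact eq_top_of_isCompl_bot hb
  · exact absurd (le_bot_iff.mp (hb.disjoint (le_sSup hc) hcb)) hc.1

theorem Function.IsPeriodicPt.isFixedPt_sum_range_iterate {M F : Type*} [AddCommMonoid M]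
    [FunLike F M M] [AddMonoidHomClass F M M] {f : F} {n : ℕ} {x : M}
    (hx : IsPeriodicPt f n x) : IsFixedPt f (∑ i ∈ Finset.range n, f^[i] x) := by
  rw [IsFixedPt, map_sum]
  simp_rw [← iterate_succ_apply' f]
  cases n with
  | zero => rfl
  | succ n =>
    rw [Finset.sum_range_succ, Finset.sum_range_succ' _ n, hx.eq, iterate_zero_apply]

section Semilinear

variable {K V : Type*} [Field K] [AddCommGroup V] [Module K V]
  {σ σ' : K →+* K} [RingHomInvPair σ σ'] [RingHomInvPair σ' σ] (F : V ≃ₛₗ[σ] V)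

theorem Module.End.mem_invtSubmodule_of_le_comap_of_eq_iterate {a : ℕ}
    {L : End K V} (hL : ⇑L = (⇑F)^[a]) {W : Submodule K V} (hW : W ≤ W.comap F.toLinearMap) :
    W ∈ L.invtSubmodule := by
  have hF : Set.MapsTo F W W := fun _ hv => hW hv
  exact L.mem_invtSubmodule_iff_mapsTo.mpr (hL ▸ hF.iterate a)

theorem Submodule.map_eq_of_le_comap [FiniteDimensional K V] {W : Submodule K V}
    (hW : W ≤ W.comap F.toLinearMap) : W.map F.toLinearMap = W := by
  refine Submodule.eq_of_le_of_finrank_eq (Submodule.map_le_iff_le_comap.mpr hW) ?_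
  exact congrArg Cardinal.toNat <| (rank_eq_of_equiv_equiv σ (F.submoduleMap W).toAddEquiv
    ⟨σ.injective, RingHomSurjective.is_surjective⟩ (F.submoduleMap W).map_smulₛₗ).symm

namespace LinearEquiv

theorem conj_iterate_apply_iterate (φ : End K V) (n : ℕ) (v : V) :
    (⇑F.conj)^[n] φ ((⇑F)^[n] v) = (⇑F)^[n] (φ v) := by
  induction n generalizing v with
  | zero => rfl
  | succ n ih =>
    rw [iterate_succ_apply' F.conj, iterate_succ_apply' F, conj_apply_apply, symm_apply_apply, ih,
      ← iterate_succ_apply' F]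

theorem conj_iterate_eq_self_of_commute {a : ℕ} {L : End K V} (hL : ⇑L = (⇑F)^[a])
    {φ : End K V} (hφ : Commute φ L) : (⇑F.conj)^[a] φ = φ := by
  ext v
  obtain ⟨u, rfl⟩ := (F.surjective.iterate a) v
  rw [conj_iterate_apply_iterate, ← hL, ← End.mul_apply, ← hφ.eq, End.mul_apply, hL]

theorem ker_le_comap_ker_of_conj_eq {φ : End K V} (hφ : F.conj φ = φ) :
    LinearMap.ker φ ≤ (LinearMap.ker φ).comap F.toLinearMap := fun v hv => by
  rw [Submodule.mem_comap, LinearMap.mem_ker, coe_coe, ← hφ, conj_apply_apply, symm_apply_apply,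
    LinearMap.mem_ker.mp hv, map_zero]

end LinearEquiv

namespace LinearMap.IsProj

variable {W : Submodule K V}

theorem conj (hW : W.map F.toLinearMap = W) {φ : End K V} (hφ : IsProj W φ) :
    IsProj W (F.conj φ) where
  map_mem v := hW ▸ Submodule.mem_map_of_mem (hφ.map_mem _)
  map_id w hw := by
    have hw' : F.symm w ∈ W := (Submodule.mem_map_equiv W).mp (hW.symm ▸ hw)
    rw [LinearEquiv.conj_apply_apply, hφ.map_id _ hw', LinearEquiv.apply_symm_apply]

theorem inv_card_smul_sum {ι : Type*} {s : Finset ι} (hs : (s.card : K) ≠ 0)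
    {φ : ι → End K V} (hφ : ∀ i ∈ s, IsProj W (φ i)) :
    IsProj W ((s.card : K)⁻¹ • ∑ i ∈ s, φ i) where
  map_mem v := W.smul_mem _ <| by
    rw [LinearMap.sum_apply]; exact W.sum_mem fun i hi => (hφ i hi).map_mem v
  map_id w hw := by
    rw [LinearMap.smul_apply, LinearMap.sum_apply,
      Finset.sum_congr rfl fun i hi => (hφ i hi).map_id w hw, Finset.sum_const,
      ← Nat.cast_smul_eq_nsmul K, smul_smul, inv_mul_cancel₀ hs, one_smul]

theorem exists_conj_eq_self (hW : W.map F.toLinearMap = W) {π : End K V}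
    (hπ : IsProj W π) {a : ℕ} (ha : (a : K) ≠ 0) (hper : (⇑F.conj)^[a] π = π) :
    ∃ ρ : End K V, IsProj W ρ ∧ F.conj ρ = ρ := by
  have hiter : ∀ i, IsProj W ((⇑F.conj)^[i] π) := fun i => by
    induction i with
    | zero => exact hπ
    | succ i ih => rw [iterate_succ_apply']; exact ih.conj F hW
  refine ⟨(a : K)⁻¹ • ∑ i ∈ Finset.range a, (⇑F.conj)^[i] π, ?_, ?_⟩
  · simpa using inv_card_smul_sum (s := Finset.range a) (by simpa using ha) fun i _ => hiter i
  · rw [map_smulₛₗ, map_inv₀, map_natCast,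
      (show IsPeriodicPt F.conj a π from hper).isFixedPt_sum_range_iterate]

end LinearMap.IsProj

def LinearEquiv.invtSubmoduleMap {L : End K V} (hFL : Function.Commute ⇑F ⇑L) :
    L.invtSubmodule ≃o L.invtSubmodule where
  toFun W := ⟨W.1.map F.toLinearMap, L.mem_invtSubmodule_iff_forall_mem_of_mem.mpr <| by
    rintro _ ⟨w, hw, rfl⟩
    exact ⟨L w, W.2 hw, hFL w⟩⟩
  invFun W := ⟨W.1.comap F.toLinearMap,
    L.mem_invtSubmodule_iff_forall_mem_of_mem.mpr fun v hv => by
    rw [Submodule.mem_comap, LinearEquiv.coe_coe, hFL v]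
    exact W.2 hv⟩
  left_inv W := Subtype.ext (Submodule.comap_map_eq_of_injective F.injective _)
  right_inv W := Subtype.ext (Submodule.map_comap_eq_of_surjective F.surjective _)
  map_rel_iff' := Submodule.map_le_map_iff_of_injective F.injective _ _

variable [FiniteDimensional K V] {a : ℕ} {L : End K V}

theorem exists_isCompl_le_comap_of_isSemisimple (hL : ⇑L = (⇑F)^[a]) (ha : (a : K) ≠ 0)
    (hLs : L.IsSemisimple) {W : Submodule K V} (hW : W ≤ W.comap F.toLinearMap) :
    ∃ W', W' ≤ W'.comap F.toLinearMap ∧ IsCompl W W' := by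
  have hWL := Module.End.mem_invtSubmodule_of_le_comap_of_eq_iterate F hL hW
  obtain ⟨U, hU, hc⟩ := Module.End.isSemisimple_iff.mp hLs W hWL
  have hπ : LinearMap.IsProj W (W.projection U hc) :=
    ⟨Submodule.projection_apply_mem hc, fun _ => Submodule.projection_apply_of_mem_left hc⟩
  have hπL : Commute (W.projection U hc) L :=
    (LinearMap.IsIdempotentElem.commute_iff hπ.isIdempotentElem).mpr
      ⟨by rwa [Submodule.range_projection], by rwa [Submodule.ker_projection]⟩
  obtain ⟨ρ, hρ, hρF⟩ := hπ.exists_conj_eq_self F (Submodule.map_eq_of_le_comap F hW) ha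
    (F.conj_iterate_eq_self_of_commute hL hπL)
  exact ⟨LinearMap.ker ρ, F.ker_le_comap_ker_of_conj_eq hρF, hρ.isCompl⟩

theorem isSemisimple_of_forall_exists_isCompl_le_comap (hL : ⇑L = (⇑F)^[a])
    (h : ∀ W : Submodule K V, W ≤ W.comap F.toLinearMap →
      ∃ W', W' ≤ W'.comap F.toLinearMap ∧ IsCompl W W') :
    L.IsSemisimple := by
  -- `L.invtSubmodule` is only a sublattice; its copy `Submodule K[X] (AEval' L)` is complete.
  have : IsArtinian K[X] (AEval' L) := isArtinian_of_tower K inferInstance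
  have : IsAtomic (Submodule K[X] (AEval' L)) :=
    isAtomic_of_orderBot_wellFounded_lt wellFounded_lt
  let φ : L.invtSubmodule ≃o Submodule K[X] (AEval' L) := AEval.mapSubmodule K V L
  let e := F.invtSubmoduleMap (L := L) (hL ▸ Function.Commute.self_iterate F a)
  refine (isSemisimpleModule_iff _ _).mpr <|
    complementedLattice_of_exists_isCompl_of_map_le (φ.symm.trans (e.trans φ)) fun q hq => ?_
  obtain ⟨W, rfl⟩ := φ.surjective q
  have heW : e W ≤ W := by simpa using hq
  obtain ⟨W', hW'F, hc⟩ := h W (Submodule.map_le_iff_le_comap.mp heW)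
  refine ⟨φ ⟨W', Module.End.mem_invtSubmodule_of_le_comap_of_eq_iterate F hL hW'F⟩, ?_⟩
  exact φ.isCompl_iff.mp ((Module.End.invtSubmodule.isCompl_iff L).mpr hc)

end Semilinear

theorem WittVector.FractionRing.charZero (p : ℕ) [Fact p.Prime] (k : Type*) [Field k]
    [CharP k p] : CharZero K(p, k) :=
  have : CharZero (WittVector p k) :=
    (RingHom.charZero_iff (map_injective _ (ZMod.castHom dvd_rfl k).injective)).mp
      ((RingHom.charZero_iff (WittVector.equiv p).symm.injective).mp inferInstance)
  charZero_of_injective_algebraMap (IsFractionRing.injective (WittVector p k) _)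

theorem WittVector.FractionRing.eq_frobenius_of_comp_algebraMap (p : ℕ) [Fact p.Prime]
    (k : Type*) [Field k] [CharP k p] [PerfectRing k p] {σ : K(p, k) →+* K(p, k)}
    (hσ : ∀ x : WittVector p k,
      σ (algebraMap (WittVector p k) K(p, k) x) = algebraMap _ _ (WittVector.frobenius x)) :
    σ = FractionRing.frobenius p k :=
  IsLocalization.ringHom_ext (nonZeroDivisors (WittVector p k)) <| RingHom.ext fun x => by
    simp [hσ, FractionRing.frobenius]

theorem isocrystal_semisimple_iff_frobenius_power_semisimple_general
    (p a : ℕ) [Fact p.Prime] (ha : 1 ≤ a)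
    (k : Type*) [Field k] [Fintype k] [CharP k p]
    (V : Type*) [AddCommGroup V]
    [Module (FractionRing (WittVector p k)) V]
    [FiniteDimensional (FractionRing (WittVector p k)) V]
    (σ : FractionRing (WittVector p k) →+* FractionRing (WittVector p k))
    (hσ : ∀ x : WittVector p k,
      σ (algebraMap (WittVector p k) (FractionRing (WittVector p k)) x) =
        algebraMap (WittVector p k) (FractionRing (WittVector p k)) (WittVector.frobenius x))
    (F : V → V) (hFadd : ∀ x y, F (x + y) = F x + F y)
    (hFbij : Function.Bijective F)
    (hFsemi : ∀ (c : FractionRing (WittVector p k)) (v : V), F (c • v) = σ c • F v)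
    (L : V →ₗ[FractionRing (WittVector p k)] V) (hL : ∀ v, L v = F^[a] v) :
    (∀ W : Submodule (FractionRing (WittVector p k)) V, (∀ v ∈ W, L v ∈ W) →
        ∃ W' : Submodule (FractionRing (WittVector p k)) V,
          (∀ v ∈ W', L v ∈ W') ∧ IsCompl W W') ↔
      (∀ W : Submodule (FractionRing (WittVector p k)) V, (∀ v ∈ W, F v ∈ W) →
        ∃ W' : Submodule (FractionRing (WittVector p k)) V,
          (∀ v ∈ W', F v ∈ W') ∧ IsCompl W W') := by
  set σₑ := WittVector.FractionRing.frobenius p k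
  obtain rfl := WittVector.FractionRing.eq_frobenius_of_comp_algebraMap p k hσ
  have := RingHomInvPair.of_ringEquiv σₑ
  have := RingHomInvPair.of_ringEquiv_symm σₑ
  let Fₑ : V ≃ₛₗ[(σₑ : K(p, k) →+* K(p, k))] V :=
    LinearEquiv.ofBijective ⟨⟨F, hFadd⟩, hFsemi⟩ hFbij
  have hLF : ⇑L = (⇑Fₑ)^[a] := funext hL
  have := WittVector.FractionRing.charZero p k
  have haK : (a : K(p, k)) ≠ 0 := Nat.cast_ne_zero.mpr (by omega)
  constructor
  · intro hLs W hW
    exact exists_isCompl_le_comap_of_isSemisimple Fₑ hLF haK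
      (Module.End.isSemisimple_iff.mpr hLs) hW
  · intro hFs
    exact Module.End.isSemisimple_iff.mp
      (isSemisimple_of_forall_exists_isCompl_le_comap Fₑ hLF hFs)

/-- **Paragraph 5.3 (e5).** Let `k = 𝔽_{p^a}`, `K` the fraction field of the Witt vectors
`W(k)`, `σ : K → K` the automorphism induced by the Witt vector Frobenius, and `(V, F)` an
`F`-isocrystal over `k` (so `F` is an additive bijection of the finite-dimensional
`K`-vector space `V` with `F (c • v) = σ c • F v`).  Let `L` be the `K`-linear endomorphism
`F^a` of `V`.  Then `L` is semisimple (every `L`-invariant subspace has an `L`-invariant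
complement) if and only if every `K`-subspace `W` of `V` with `F W ⊆ W` admits a
complementary subspace `W'` with `F W' ⊆ W'`. -/
theorem isocrystal_semisimple_iff_frobenius_power_semisimple
    (p a : ℕ) [Fact p.Prime] (ha : 1 ≤ a)
    (k : Type*) [Field k] [Fintype k] [CharP k p] (hk : Fintype.card k = p ^ a)
    (V : Type*) [AddCommGroup V]
    [Module (FractionRing (WittVector p k)) V]
    [FiniteDimensional (FractionRing (WittVector p k)) V]
    (σ : FractionRing (WittVector p k) →+* FractionRing (WittVector p k))
    (hσ : ∀ x : WittVector p k,
      σ (algebraMap (WittVector p k) (FractionRing (WittVector p k)) x) =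
        algebraMap (WittVector p k) (FractionRing (WittVector p k)) (WittVector.frobenius x))
    (F : V → V) (hFadd : ∀ x y, F (x + y) = F x + F y)
    (hFbij : Function.Bijective F)
    (hFsemi : ∀ (c : FractionRing (WittVector p k)) (v : V), F (c • v) = σ c • F v)
    (L : V →ₗ[FractionRing (WittVector p k)] V) (hL : ∀ v, L v = F^[a] v) :
    (∀ W : Submodule (FractionRing (WittVector p k)) V, (∀ v ∈ W, L v ∈ W) →
        ∃ W' : Submodule (FractionRing (WittVector p k)) V,
          (∀ v ∈ W', L v ∈ W') ∧ IsCompl W W') ↔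
      (∀ W : Submodule (FractionRing (WittVector p k)) V, (∀ v ∈ W, F v ∈ W) →
        ∃ W' : Submodule (FractionRing (WittVector p k)) V,
          (∀ v ∈ W', F v ∈ W') ∧ IsCompl W W') :=
  isocrystal_semisimple_iff_frobenius_power_semisimple_general p a ha k V σ hσ F hFadd hFbij hFsemi
    L hL
end
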